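/- arXiv:1907.11030 — 2 statements merged into one kernel-verified Lean document; each statement's English description precedes it below -/
import Mathlib

section
/- Let R be a commutative ring, let q ⊆ p be prime ideals of R, and let E be an injective hull of the R-module R/p. Then Hom_R(κ(q), E) ≠ 0, where κ(q) = R_q/qR_q is the residue field at q. (Concretely, the composition R/q → R/p ⊆ E of the canonical surjection with the inclusion extends along the embedding R/q ⊆ κ(q) to a nonzero R-linear map κ(q) → E.) -/
/-- `f : M →ₗ[R] E` exhibits `E` as an injective hull of `M`: `E` is an injective module
and `f` is injective with essential image (every nonzero submodule of `E` meets the image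
of `f` nontrivially). -/
structure IsInjectiveHull (R : Type) [CommRing R] {M E : Type} [AddCommGroup M] [Module R M]
    [AddCommGroup E] [Module R E] (f : M →ₗ[R] E) : Prop where
  injective : Module.Injective R E
  mono : Function.Injective f
  essential : ∀ N : Submodule R E, N ≠ ⊥ → N ⊓ LinearMap.range f ≠ ⊥

/-- **Lemma.** Let `R` be a commutative ring, `q ⊆ p` prime ideals of `R` and `E` an
injective hull of `R/p`. Then `Hom_R(κ(q), E) ≠ 0`, where `κ(q) = R_q/qR_q` is the residue
field at `q`: there is a nonzero `R`-linear map `κ(q) → E`. -/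
theorem exists_nonzero_linearMap_residueField_to_injective_hull
    (R : Type) [CommRing R] (q p : Ideal R) [q.IsPrime] [p.IsPrime] (hqp : q ≤ p)
    (E : Type) [AddCommGroup E] [Module R E]
    (f : (R ⧸ p) →ₗ[R] E) (hf : IsInjectiveHull R f) :
    ∃ g : IsLocalRing.ResidueField (Localization.AtPrime q) →ₗ[R] E, g ≠ 0 := by
  set K := IsLocalRing.ResidueField (Localization.AtPrime q)
  -- kernel of `algebraMap R K` is `q`
  have hker : RingHom.ker (algebraMap R K) = q := by
    have : (algebraMap R K) =
        (IsLocalRing.residue (Localization.AtPrime q)).comp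
          (algebraMap R (Localization.AtPrime q)) := by
      ext x
      rfl
    rw [this, ← RingHom.comap_ker, IsLocalRing.ker_residue]
    exact Localization.AtPrime.comap_maximalIdeal
  -- the injection `R/q → κ(q)`
  let ι : (R ⧸ q) →ₗ[R] K :=
    (Ideal.Quotient.liftₐ q (Algebra.ofId R K)
      (fun a ha => by
        have ha' : a ∈ RingHom.ker (algebraMap R K) := hker.ge ha
        exact ha')).toLinearMap
  have hι : Function.Injective ι := by
    intro x y hxy
    obtain ⟨a, rfl⟩ := Ideal.Quotient.mk_surjective x
    obtain ⟨b, rfl⟩ := Ideal.Quotient.mk_surjective y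
    have : algebraMap R K (a - b) = 0 := by
      simp only [map_sub, sub_eq_zero]
      exact hxy
    rw [Ideal.Quotient.eq]
    rw [← hker]
    exact this
  -- the map `R/q → R/p → E`
  let ψ : (R ⧸ q) →ₗ[R] (R ⧸ p) := Submodule.mapQ q p LinearMap.id hqp
  let φ : (R ⧸ q) →ₗ[R] E := f ∘ₗ ψ
  have hφ : φ (Ideal.Quotient.mk q 1) ≠ 0 := by
    have h1 : (Ideal.Quotient.mk p 1 : R ⧸ p) ≠ 0 := by
      rw [Ne, Ideal.Quotient.eq_zero_iff_mem]
      exact fun h => ‹p.IsPrime›.ne_top (Ideal.eq_top_of_isUnit_mem p h isUnit_one)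
    have : ψ (Ideal.Quotient.mk q 1) = Ideal.Quotient.mk p 1 := rfl
    simp only [φ, LinearMap.comp_apply, this]
    intro h
    exact h1 (hf.mono (by simpa using h))
  obtain ⟨g, hg⟩ := hf.injective.out ι hι φ
  refine ⟨g, fun h0 => hφ ?_⟩
  rw [← hg (Ideal.Quotient.mk q 1), h0, LinearMap.zero_apply]
end

section
/- Let R be a commutative noetherian ring, X an object of D(Mod R), p a prime ideal of R, n an integer, and E(R/p) an injective hull of R/p. Then Hom_{D(Mod R)}(X, E(R/p)[-n]) = 0 if and only if p ∉ Supp H^n(X), i.e., if and only if the localization H^n(X)_p is zero. -/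
open CategoryTheory CategoryTheory.Limits

/-- The stalk complex with the module `M` concentrated in cohomological degree `n`,
viewed as an object of the derived category; this is `M[-n]`. -/
noncomputable def stalk (R : Type) [CommRing R] [HasDerivedCategory (ModuleCat R)]
    (M : ModuleCat R) (n : ℤ) : DerivedCategory (ModuleCat R) :=
  DerivedCategory.Q.obj ((HomologicalComplex.single (ModuleCat R) (ComplexShape.up ℤ) n).obj M)

/-! Since `E(R/p)` is injective, the stalk complex `E(R/p)[-n]` is K-injective, so morphisms
`X ⟶ E(R/p)[-n]` in the derived category are homotopy classes of chain maps from a complex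
representing `X`. A chain map `K ⟶ I[-n]` with `I` injective is null-homotopic exactly when it
vanishes on `H^n(K)`, and every map `H^n(K) ⟶ I` comes from such a chain map; hence
`Hom(X, E(R/p)[-n]) = 0` iff `Hom_R(H^n(X), E(R/p)) = 0`. Finally `Hom_R(M, E(R/p)) = 0` iff
`M_p = 0`: elements outside `p` act injectively on `E(R/p)` because `R/p` is essential in it,
and an element `m` with `ann(m) ⊆ p` gives a nonzero map `Rm ≅ R/ann(m) ⟶ R/p ⟶ E(R/p)`, which
extends to `M`. -/

namespace HomologicalComplex

variable {C : Type*} [Category* C] [Abelian C]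

lemma homologyπ_homologyMap_singleObjHomologySelfIso_hom {ι : Type*} {c : ComplexShape ι}
    [DecidableEq ι] {K : HomologicalComplex C c} {j : ι} {A : C}
    (ψ : K ⟶ (single C c j).obj A) :
    K.homologyπ j ≫ homologyMap ψ j ≫ (singleObjHomologySelfIso c j A).hom =
      K.iCycles j ≫ ψ.f j ≫ (singleObjXSelf c j A).hom := by
  rw [homologyπ_naturality_assoc, homologyπ_singleObjHomologySelfIso_hom,
    singleObjCyclesSelfIso_hom, cyclesMap_i_assoc]

end HomologicalComplex

namespace CochainComplex

open HomologicalComplex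

variable {C : Type*} [Category* C] [Abelian C]

section

variable {K : CochainComplex C ℤ} {I : C} [Injective I] {n : ℤ}

lemma nonempty_homotopy_zero_of_homologyMap_eq_zero (ψ : K ⟶ (single C (.up ℤ) n).obj I)
    (hψ : homologyMap ψ n = 0) : Nonempty (Homotopy ψ 0) := by
  let a := ψ.f n ≫ (singleObjXSelf (.up ℤ) n I).hom
  have ha : K.iCycles n ≫ a = 0 := by
    rw [← homologyπ_homologyMap_singleObjHomologySelfIso_hom, hψ, zero_comp, comp_zero]
  have hexact : (ShortComplex.mk _ _ (K.iCycles_d n (n + 1))).Exact :=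
    ShortComplex.exact_of_f_is_kernel _ (K.cyclesIsKernel n (n + 1) (by simp))
  -- `a` kills the cycles, so it factors through `d : K^n ⟶ K^(n+1)`; the factorization,
  -- extended to `K^(n+1)` by injectivity of `I`, is the null-homotopy.
  let h : K.X (n + 1) ⟶ I := hexact.descToInjective a ha
  let hom (i j : ℤ) (hji : (ComplexShape.up ℤ).Rel j i) :
      K.X i ⟶ ((single C (.up ℤ) n).obj I).X j :=
    if hi : i = n + 1 then
      (K.XIsoOfEq hi).hom ≫ h ≫ (singleObjXIsoOfEq (.up ℤ) n I j (by simp at hji; omega)).inv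
    else 0
  have hψ_eq : ψ = Homotopy.nullHomotopicMap' hom := by
    apply to_single_hom_ext
    rw [Homotopy.nullHomotopicMap'_f (show n - 1 + 1 = n by omega) rfl]
    have hd : K.d n (n + 1) ≫ h ≫ (singleObjXSelf (.up ℤ) n I).inv = ψ.f n := by
      rw [hexact.comp_descToInjective_assoc, Category.assoc, Iso.hom_inv_id, Category.comp_id]
    simp only [hom, dif_pos, single_obj_d, comp_zero, add_zero, XIsoOfEq_rfl, Iso.refl_hom,
      Category.id_comp]
    exact hd.symm
  exact ⟨(Homotopy.ofEq hψ_eq).trans (Homotopy.nullHomotopy' hom)⟩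

lemma exists_homologyMap_toSingle_eq (φ : K.homology n ⟶ I) :
    ∃ ψ : K ⟶ (single C (.up ℤ) n).obj I,
      homologyMap ψ n ≫ (singleObjHomologySelfIso (.up ℤ) n I).hom = φ := by
  let u := Injective.factorThru (K.homologyπ n ≫ φ) (K.iCycles n)
  have hu : ∀ i, (ComplexShape.up ℤ).Rel i n → K.d i n ≫ u = 0 := fun i hi => by
    rw [← K.toCycles_i i n, Category.assoc, Injective.comp_factorThru,
      K.toCycles_comp_homologyπ_assoc, zero_comp]
  refine ⟨mkHomToSingle u hu, (cancel_epi (K.homologyπ n)).1 ?_⟩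
  rw [homologyπ_homologyMap_singleObjHomologySelfIso_hom, mkHomToSingle_f, Category.assoc,
    Iso.inv_hom_id, Category.comp_id, Injective.comp_factorThru]

end

lemma subsingleton_quotient_obj_hom_single_iff (K : CochainComplex C ℤ) (I : C) [Injective I]
    (n : ℤ) :
    Subsingleton ((HomotopyCategory.quotient C (.up ℤ)).obj K ⟶
        (HomotopyCategory.quotient C (.up ℤ)).obj ((single C (.up ℤ) n).obj I)) ↔
      Subsingleton (K.homology n ⟶ I) := by
  rw [subsingleton_iff_forall_eq 0, subsingleton_iff_forall_eq 0]
  constructor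
  · intro h φ
    obtain ⟨ψ, rfl⟩ := exists_homologyMap_toSingle_eq φ
    have hψ : Homotopy ψ 0 :=
      HomotopyCategory.homotopyOfEq _ _ ((h _).trans (Functor.map_zero _ _ _).symm)
    rw [hψ.homologyMap_eq, homologyMap_zero, zero_comp]
  · intro h g
    obtain ⟨ψ, rfl⟩ := (HomotopyCategory.quotient C _).map_surjective g
    obtain ⟨hψ⟩ := nonempty_homotopy_zero_of_homologyMap_eq_zero ψ <| by
      rw [← cancel_mono (singleObjHomologySelfIso _ n I).hom, h (homologyMap ψ n ≫ _), zero_comp]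
    rw [HomotopyCategory.eq_of_homotopy ψ 0 hψ, Functor.map_zero]

instance (I : C) [Injective I] (n : ℤ) : IsKInjective ((single C (.up ℤ) n).obj I) := by
  have (m : ℤ) : Injective (((single C (.up ℤ) n).obj I).X m) := by
    by_cases hm : m = n
    · exact Injective.of_iso (singleObjXIsoOfEq _ n I m hm).symm inferInstance
    · exact (isZero_single_obj_X _ n I m hm).injective
  exact isKInjective_of_injective _ n

end CochainComplex

namespace DerivedCategory

open HomologicalComplex

variable {C : Type*} [Category* C] [Abelian C] [HasDerivedCategory C]

lemma subsingleton_Q_obj_hom_iff_of_isKInjective (K L : CochainComplex C ℤ) [L.IsKInjective] :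
    Subsingleton (Q.obj K ⟶ Q.obj L) ↔
      Subsingleton ((HomotopyCategory.quotient C (.up ℤ)).obj K ⟶
        (HomotopyCategory.quotient C (.up ℤ)).obj L) :=
  ((Equiv.ofBijective _ (CochainComplex.IsKInjective.Qh_map_bijective _ L)).trans
    (((quotientCompQhIso C).app K).homCongr ((quotientCompQhIso C).app L))).subsingleton_congr.symm

lemma subsingleton_hom_Q_obj_single_iff (X : DerivedCategory C) (I : C) [Injective I] (n : ℤ) :
    Subsingleton (X ⟶ Q.obj ((single C (.up ℤ) n).obj I)) ↔
      Subsingleton ((homologyFunctor C n).obj X ⟶ I) := by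
  let K := Q.objPreimage X
  let e : X ≅ Q.obj K := (Q.objObjPreimageIso X).symm
  let eH : (homologyFunctor C n).obj X ≅ K.homology n :=
    (homologyFunctor C n).mapIso e ≪≫ (homologyFunctorFactors C n).app K
  rw [(e.homCongr (Iso.refl _)).subsingleton_congr, (eH.homCongr (Iso.refl I)).subsingleton_congr,
    subsingleton_Q_obj_hom_iff_of_isKInjective,
    CochainComplex.subsingleton_quotient_obj_hom_single_iff]

end DerivedCategory

section ModuleTheory

variable {R : Type} [CommRing R] {p : Ideal R} [p.IsPrime] {E : Type} [AddCommGroup E]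
  [Module R E] {f : (R ⧸ p) →ₗ[R] E}

lemma Ideal.Quotient.eq_zero_of_smul_eq_zero {s : R} (hs : s ∉ p) {y : R ⧸ p}
    (hy : s • y = 0) : y = 0 := by
  rw [Algebra.smul_def, mul_eq_zero] at hy
  exact hy.resolve_left (by rwa [Ideal.Quotient.algebraMap_eq, Ideal.Quotient.eq_zero_iff_mem])

lemma IsInjectiveHull.eq_zero_of_smul_eq_zero (hf : IsInjectiveHull R f) {s : R} (hs : s ∉ p)
    {e : E} (he : s • e = 0) : e = 0 := by
  by_contra hne
  let N : Submodule R E := LinearMap.ker (s • LinearMap.id)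
  have hN : N ≠ ⊥ := fun h => hne <| by
    have : e ∈ N := he
    rwa [h, Submodule.mem_bot] at this
  obtain ⟨_, ⟨hyN, y, rfl⟩, hy⟩ := Submodule.exists_mem_ne_zero_of_ne_bot (hf.essential N hN)
  have hsy : s • y = 0 := hf.mono <| by simpa [N, map_smul] using hyN
  exact hy <| by rw [Ideal.Quotient.eq_zero_of_smul_eq_zero hs hsy, map_zero]

lemma IsInjectiveHull.exists_apply_ne_zero (hf : IsInjectiveHull R f) {M : Type}
    [AddCommGroup M] [Module R M] {m : M} (hm : Ideal.torsionOf R M m ≤ p) :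
    ∃ φ : M →ₗ[R] E, φ m ≠ 0 := by
  let g : (R ∙ m) →ₗ[R] E := f ∘ₗ Submodule.factor hm ∘ₗ
    (Ideal.quotTorsionOfEquivSpanSingleton R M m).symm.toLinearMap
  obtain ⟨φ, hφ⟩ := hf.injective.out _ (Submodule.injective_subtype _) g
  refine ⟨φ, fun h0 => ?_⟩
  have hm1 : (Ideal.quotTorsionOfEquivSpanSingleton R M m).symm
      ⟨m, Submodule.mem_span_singleton_self m⟩ = Submodule.Quotient.mk 1 := by
    rw [LinearEquiv.symm_apply_eq, Ideal.quotTorsionOfEquivSpanSingleton_apply_mk, one_smul]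
  have hg : g ⟨m, Submodule.mem_span_singleton_self m⟩ = f (Ideal.Quotient.mk p 1) := by
    simp [g, hm1]
  have : f (Ideal.Quotient.mk p 1) = 0 := by rw [← hg, ← hφ]; exact h0
  exact one_ne_zero (hf.mono (this.trans (map_zero f).symm))

lemma IsInjectiveHull.subsingleton_linearMap_iff (hf : IsInjectiveHull R f) (M : Type)
    [AddCommGroup M] [Module R M] :
    Subsingleton (M →ₗ[R] E) ↔ Subsingleton (LocalizedModule p.primeCompl M) := by
  rw [LocalizedModule.subsingleton_iff]
  constructor
  · intro h m
    by_contra! hm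
    obtain ⟨φ, hφ⟩ := hf.exists_apply_ne_zero (m := m) fun r hr =>
      not_not.1 fun hrp => hm r hrp hr
    exact hφ (by rw [Subsingleton.elim φ 0, LinearMap.zero_apply])
  · refine fun h => ⟨fun φ ψ => LinearMap.ext fun m => ?_⟩
    obtain ⟨s, hs, hsm⟩ := h m
    refine sub_eq_zero.1 (hf.eq_zero_of_smul_eq_zero hs ?_)
    rw [smul_sub, ← map_smul, ← map_smul, hsm, map_zero, map_zero, sub_zero]

end ModuleTheory

theorem hom_to_injective_hull_stalk_eq_zero_iff_not_mem_support_general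
    (R : Type) [CommRing R] [HasDerivedCategory (ModuleCat R)]
    (X : DerivedCategory (ModuleCat R)) (p : Ideal R) [p.IsPrime] (n : ℤ)
    (E : ModuleCat R) (f : (R ⧸ p) →ₗ[R] E) (hf : IsInjectiveHull R f) :
    (∀ g : X ⟶ stalk R E n, g = 0) ↔
      Subsingleton (LocalizedModule p.primeCompl
        ((DerivedCategory.homologyFunctor (ModuleCat R) n).obj X)) := by
  have : Injective E := (Module.injective_iff_injective_object R E).1 hf.injective
  rw [← hf.subsingleton_linearMap_iff, ← ModuleCat.homEquiv.subsingleton_congr,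
    ← DerivedCategory.subsingleton_hom_Q_obj_single_iff, subsingleton_iff_forall_eq 0]
  rfl

/-- **Lemma.** Let `R` be a commutative noetherian ring, `X` an object of `D(Mod R)`, `p` a
prime ideal, `n` an integer, and `E(R/p)` an injective hull of `R/p`. Then
`Hom_{D(Mod R)}(X, E(R/p)[-n]) = 0` if and only if `p ∉ Supp H^n(X)`, i.e. the localization
`H^n(X)_p` vanishes. -/
theorem hom_to_injective_hull_stalk_eq_zero_iff_not_mem_support
    (R : Type) [CommRing R] [IsNoetherianRing R] [HasDerivedCategory (ModuleCat R)]
    (X : DerivedCategory (ModuleCat R)) (p : Ideal R) [p.IsPrime] (n : ℤ)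
    (E : ModuleCat R) (f : (R ⧸ p) →ₗ[R] E) (hf : IsInjectiveHull R f) :
    (∀ g : X ⟶ stalk R E n, g = 0) ↔
      Subsingleton (LocalizedModule p.primeCompl
        ((DerivedCategory.homologyFunctor (ModuleCat R) n).obj X)) :=
  hom_to_injective_hull_stalk_eq_zero_iff_not_mem_support_general R X p n E f hf
end
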